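/- For ε ∈ (0,1), the smooth function u^ε(z₁,z₂) = -2(Re z₂)²/log(|z₁|² + ε) - (|z₁|² + ε)(log(|z₁|² + ε) - 2) on 𝔻_{1-ε} × ℂ satisfies det(∂∂̄ u^ε) = 1 - ε[2(Re z₂)²/((|z₁|² + ε)² log³(|z₁|² + ε)) + 1/((|z₁|² + ε) log(|z₁|² + ε))]. -/

import Mathlib

/-- Wirtinger derivative `∂/∂z₁`. -/
noncomputable def wd1 (f : ℂ × ℂ → ℂ) (z : ℂ × ℂ) : ℂ :=
  (fderiv ℝ f z (1, 0) - Complex.I * fderiv ℝ f z (Complex.I, 0)) / 2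

/-- Wirtinger derivative `∂/∂z̄₁`. -/
noncomputable def wd1b (f : ℂ × ℂ → ℂ) (z : ℂ × ℂ) : ℂ :=
  (fderiv ℝ f z (1, 0) + Complex.I * fderiv ℝ f z (Complex.I, 0)) / 2

/-- Wirtinger derivative `∂/∂z₂`. -/
noncomputable def wd2 (f : ℂ × ℂ → ℂ) (z : ℂ × ℂ) : ℂ :=
  (fderiv ℝ f z (0, 1) - Complex.I * fderiv ℝ f z (0, Complex.I)) / 2

/-- Wirtinger derivative `∂/∂z̄₂`. -/
noncomputable def wd2b (f : ℂ × ℂ → ℂ) (z : ℂ × ℂ) : ℂ :=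
  (fderiv ℝ f z (0, 1) + Complex.I * fderiv ℝ f z (0, Complex.I)) / 2

/-- The complex Hessian `(u_{i j̄})` of `f` at `z`. -/
noncomputable def cHess (f : ℂ × ℂ → ℂ) (z : ℂ × ℂ) : Matrix (Fin 2) (Fin 2) ℂ :=
  !![wd1 (wd1b f) z, wd1 (wd2b f) z; wd2 (wd1b f) z, wd2 (wd2b f) z]

/-- `u^ε(z₁,z₂) = -2(Re z₂)²/log(|z₁|²+ε) - (|z₁|²+ε)(log(|z₁|²+ε)-2)` (as a ℂ-valued
function with real values). -/
noncomputable def uE (ε : ℝ) (z : ℂ × ℂ) : ℂ :=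
  ((-2 * (z.2.re) ^ 2 / Real.log ((‖z.1‖) ^ 2 + ε)
    - ((‖z.1‖) ^ 2 + ε) * (Real.log ((‖z.1‖) ^ 2 + ε) - 2) : ℝ) : ℂ)


/-!
`u^ε` depends only on `t = |z₁|²` and `y = Re z₂`. For `u = φ(|z₁|², Re z₂)` the chain rule
gives `∂u/∂z̄₁ = φ_t z₁` and `∂u/∂z̄₂ = φ_y / 2`; differentiating once more,
`det(∂∂̄u) = ((φ_t + t φ_tt) φ_yy - t φ_ty φ_yt) / 4`, which for the explicit profile of `u^ε`
simplifies to the stated expression.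
-/

open ComplexConjugate ContinuousLinearMap Topology

noncomputable def liftNormSqRe (φ : ℝ × ℝ → ℝ) (w : ℂ × ℂ) : ℂ :=
  (φ (‖w.1‖ ^ 2, w.2.re) : ℂ)

section Wirtinger

variable {f g : ℂ × ℂ → ℂ} {z : ℂ × ℂ}

theorem wd1_congr (h : f =ᶠ[𝓝 z] g) : wd1 f z = wd1 g z := by
  simp only [wd1, h.fderiv_eq]

theorem wd2_congr (h : f =ᶠ[𝓝 z] g) : wd2 f z = wd2 g z := by
  simp only [wd2, h.fderiv_eq]

theorem wd1_mul (hf : DifferentiableAt ℝ f z) (hg : DifferentiableAt ℝ g z) :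
    wd1 (fun w => f w * g w) z = wd1 f z * g z + f z * wd1 g z := by
  simp only [wd1, fderiv_fun_mul hf hg, add_apply, smul_apply, smul_eq_mul]
  ring

theorem wd2_mul (hf : DifferentiableAt ℝ f z) (hg : DifferentiableAt ℝ g z) :
    wd2 (fun w => f w * g w) z = wd2 f z * g z + f z * wd2 g z := by
  simp only [wd2, fderiv_fun_mul hf hg, add_apply, smul_apply, smul_eq_mul]
  ring

theorem wd1_div_const (hf : DifferentiableAt ℝ f z) (c : ℂ) :
    wd1 (fun w => f w / c) z = wd1 f z / c := by
  simp only [wd1, div_eq_mul_inv, fderiv_mul_const hf, smul_apply, smul_eq_mul]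
  ring

theorem wd2_div_const (hf : DifferentiableAt ℝ f z) (c : ℂ) :
    wd2 (fun w => f w / c) z = wd2 f z / c := by
  simp only [wd2, div_eq_mul_inv, fderiv_mul_const hf, smul_apply, smul_eq_mul]
  ring

theorem wd1_fst : wd1 Prod.fst z = 1 := by
  simp [wd1, fderiv_fst]

theorem wd2_fst : wd2 Prod.fst z = 0 := by
  simp [wd2, fderiv_fst]

end Wirtinger

section LiftNormSqRe

variable {φ : ℝ × ℝ → ℝ} {a b : ℝ} {z : ℂ × ℂ}

theorem hasFDerivAt_liftNormSqRe
    (h : HasFDerivAt φ (a • fst ℝ ℝ ℝ + b • snd ℝ ℝ ℝ) (‖z.1‖ ^ 2, z.2.re)) :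
    HasFDerivAt (liftNormSqRe φ)
      (Complex.ofRealCLM ∘L
        ((2 * a) • innerSL ℝ z.1 ∘L fst ℝ ℂ ℂ + b • Complex.reCLM ∘L snd ℝ ℂ ℂ)) z := by
  have hq : HasFDerivAt (fun w : ℂ × ℂ => (‖w.1‖ ^ 2, w.2.re))
      ((2 • innerSL ℝ z.1 ∘L fst ℝ ℂ ℂ).prod (Complex.reCLM ∘L snd ℝ ℂ ℂ)) z :=
    hasFDerivAt_fst.norm_sq.prodMk (Complex.reCLM.hasFDerivAt.comp z hasFDerivAt_snd)
  refine (Complex.ofRealCLM.hasFDerivAt.comp z (h.comp z hq)).congr_fderiv ?_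
  ext v
  · simp; ring
  · simp

theorem differentiableAt_liftNormSqRe
    (h : HasFDerivAt φ (a • fst ℝ ℝ ℝ + b • snd ℝ ℝ ℝ) (‖z.1‖ ^ 2, z.2.re)) :
    DifferentiableAt ℝ (liftNormSqRe φ) z :=
  (hasFDerivAt_liftNormSqRe h).differentiableAt

theorem wd1_liftNormSqRe
    (h : HasFDerivAt φ (a • fst ℝ ℝ ℝ + b • snd ℝ ℝ ℝ) (‖z.1‖ ^ 2, z.2.re)) :
    wd1 (liftNormSqRe φ) z = a * conj z.1 := by
  simp only [wd1, (hasFDerivAt_liftNormSqRe h).fderiv]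
  apply Complex.ext <;> simp [Complex.inner] <;> ring

theorem wd1b_liftNormSqRe
    (h : HasFDerivAt φ (a • fst ℝ ℝ ℝ + b • snd ℝ ℝ ℝ) (‖z.1‖ ^ 2, z.2.re)) :
    wd1b (liftNormSqRe φ) z = a * z.1 := by
  simp only [wd1b, (hasFDerivAt_liftNormSqRe h).fderiv]
  apply Complex.ext <;> simp [Complex.inner] <;> ring

theorem wd2_liftNormSqRe
    (h : HasFDerivAt φ (a • fst ℝ ℝ ℝ + b • snd ℝ ℝ ℝ) (‖z.1‖ ^ 2, z.2.re)) :
    wd2 (liftNormSqRe φ) z = b / 2 := by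
  simp only [wd2, (hasFDerivAt_liftNormSqRe h).fderiv]
  apply Complex.ext <;> simp

theorem wd2b_liftNormSqRe
    (h : HasFDerivAt φ (a • fst ℝ ℝ ℝ + b • snd ℝ ℝ ℝ) (‖z.1‖ ^ 2, z.2.re)) :
    wd2b (liftNormSqRe φ) z = b / 2 := by
  simp only [wd2b, (hasFDerivAt_liftNormSqRe h).fderiv]
  apply Complex.ext <;> simp

end LiftNormSqRe

/- `a`, `b` play the roles of `φ_t`, `φ_y`; only their first derivatives at the point enter,
so `φ` need not be `C²`. -/
theorem cHess_liftNormSqRe {φ a b : ℝ × ℝ → ℝ} {z : ℂ × ℂ} {aₜ aᵧ bₜ bᵧ : ℝ}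
    (hφ : ∀ᶠ q in 𝓝 (‖z.1‖ ^ 2, z.2.re),
      HasFDerivAt φ (a q • fst ℝ ℝ ℝ + b q • snd ℝ ℝ ℝ) q)
    (ha : HasFDerivAt a (aₜ • fst ℝ ℝ ℝ + aᵧ • snd ℝ ℝ ℝ) (‖z.1‖ ^ 2, z.2.re))
    (hb : HasFDerivAt b (bₜ • fst ℝ ℝ ℝ + bᵧ • snd ℝ ℝ ℝ) (‖z.1‖ ^ 2, z.2.re)) :
    cHess (liftNormSqRe φ) z =
      !![liftNormSqRe a z + ‖z.1‖ ^ 2 * aₜ, conj z.1 * bₜ / 2; z.1 * aᵧ / 2, bᵧ / 4] := by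
  have hφ' : ∀ᶠ w in 𝓝 z, HasFDerivAt φ (a (‖w.1‖ ^ 2, w.2.re) • fst ℝ ℝ ℝ
      + b (‖w.1‖ ^ 2, w.2.re) • snd ℝ ℝ ℝ) (‖w.1‖ ^ 2, w.2.re) :=
    (by fun_prop : Continuous fun w : ℂ × ℂ => (‖w.1‖ ^ 2, w.2.re)).continuousAt.eventually hφ
  have h1b : wd1b (liftNormSqRe φ) =ᶠ[𝓝 z] fun w => w.1 * liftNormSqRe a w :=
    hφ'.mono fun w hw => (wd1b_liftNormSqRe hw).trans (mul_comm _ _)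
  have h2b : wd2b (liftNormSqRe φ) =ᶠ[𝓝 z] fun w => liftNormSqRe b w / 2 :=
    hφ'.mono fun w hw => wd2b_liftNormSqRe hw
  have hfst : DifferentiableAt ℝ (Prod.fst : ℂ × ℂ → ℂ) z := differentiableAt_fst
  have e11 : wd1 (wd1b (liftNormSqRe φ)) z = liftNormSqRe a z + ‖z.1‖ ^ 2 * aₜ := by
    rw [wd1_congr h1b, wd1_mul hfst (differentiableAt_liftNormSqRe ha), wd1_fst,
      wd1_liftNormSqRe ha]
    linear_combination (aₜ : ℂ) * Complex.mul_conj' z.1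
  have e12 : wd1 (wd2b (liftNormSqRe φ)) z = conj z.1 * bₜ / 2 := by
    rw [wd1_congr h2b, wd1_div_const (differentiableAt_liftNormSqRe hb), wd1_liftNormSqRe hb]
    ring
  have e21 : wd2 (wd1b (liftNormSqRe φ)) z = z.1 * aᵧ / 2 := by
    rw [wd2_congr h1b, wd2_mul hfst (differentiableAt_liftNormSqRe ha), wd2_fst,
      wd2_liftNormSqRe ha]
    ring
  have e22 : wd2 (wd2b (liftNormSqRe φ)) z = bᵧ / 4 := by
    rw [wd2_congr h2b, wd2_div_const (differentiableAt_liftNormSqRe hb), wd2_liftNormSqRe hb]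
    ring
  rw [cHess, e11, e12, e21, e22]

theorem det_cHess_liftNormSqRe {φ a b : ℝ × ℝ → ℝ} {z : ℂ × ℂ} {aₜ aᵧ bₜ bᵧ : ℝ}
    (hφ : ∀ᶠ q in 𝓝 (‖z.1‖ ^ 2, z.2.re),
      HasFDerivAt φ (a q • fst ℝ ℝ ℝ + b q • snd ℝ ℝ ℝ) q)
    (ha : HasFDerivAt a (aₜ • fst ℝ ℝ ℝ + aᵧ • snd ℝ ℝ ℝ) (‖z.1‖ ^ 2, z.2.re))
    (hb : HasFDerivAt b (bₜ • fst ℝ ℝ ℝ + bᵧ • snd ℝ ℝ ℝ) (‖z.1‖ ^ 2, z.2.re)) :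
    (cHess (liftNormSqRe φ) z).det =
      (((a (‖z.1‖ ^ 2, z.2.re) + ‖z.1‖ ^ 2 * aₜ) * bᵧ - ‖z.1‖ ^ 2 * aᵧ * bₜ) / 4 : ℝ) := by
  rw [cHess_liftNormSqRe hφ ha hb, Matrix.det_fin_two_of, liftNormSqRe]
  push_cast
  linear_combination (-(aᵧ * bₜ / 4) : ℂ) * Complex.mul_conj' z.1

theorem hasFDerivAt_mul_comp_fst_snd {g h : ℝ → ℝ} {g' h' : ℝ} {p : ℝ × ℝ}
    (hg : HasDerivAt g g' p.1) (hh : HasDerivAt h h' p.2) :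
    HasFDerivAt (fun q : ℝ × ℝ => g q.1 * h q.2)
      ((g' * h p.2) • fst ℝ ℝ ℝ + (g p.1 * h') • snd ℝ ℝ ℝ) p := by
  refine ((hg.comp_hasFDerivAt p hasFDerivAt_fst).mul
    (hh.comp_hasFDerivAt p hasFDerivAt_snd)).congr_fderiv ?_
  ext <;> simp [mul_comm]

theorem hasFDerivAt_add_mul_comp_fst_snd {f g h : ℝ → ℝ} {f' g' h' : ℝ} {p : ℝ × ℝ}
    (hf : HasDerivAt f f' p.1) (hg : HasDerivAt g g' p.1) (hh : HasDerivAt h h' p.2) :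
    HasFDerivAt (fun q : ℝ × ℝ => f q.1 + g q.1 * h q.2)
      ((f' + g' * h p.2) • fst ℝ ℝ ℝ + (g p.1 * h') • snd ℝ ℝ ℝ) p := by
  refine ((hf.comp_hasFDerivAt p hasFDerivAt_fst).add
    (hasFDerivAt_mul_comp_fst_snd hg hh)).congr_fderiv ?_
  ext <;> simp

section LogDerivatives

variable {s : ℝ}

theorem hasDerivAt_mul_log_sub_two (hs : s ≠ 0) :
    HasDerivAt (fun s => s * (Real.log s - 2)) (Real.log s - 1) s := by
  refine ((hasDerivAt_id s).mul ((Real.hasDerivAt_log hs).sub_const 2)).congr_deriv ?_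
  simp only [id]
  field_simp
  ring

theorem hasDerivAt_inv_log (hs : s ≠ 0) (hL : Real.log s ≠ 0) :
    HasDerivAt (fun s => (Real.log s)⁻¹) (-(s * Real.log s ^ 2)⁻¹) s := by
  refine ((Real.hasDerivAt_log hs).inv hL).congr_deriv ?_
  field_simp

theorem hasDerivAt_inv_mul_log_sq (hs : s ≠ 0) (hL : Real.log s ≠ 0) :
    HasDerivAt (fun s => (s * Real.log s ^ 2)⁻¹)
      (-(Real.log s + 2) / (s ^ 2 * Real.log s ^ 3)) s := by
  refine (((hasDerivAt_id s).mul ((Real.hasDerivAt_log hs).pow 2)).inv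
    (by simp [hs, hL])).congr_deriv ?_
  simp only [Pi.mul_apply, Pi.pow_apply, id]
  field_simp
  ring

end LogDerivatives

section Profile

variable (ε : ℝ)

noncomputable def uEProfile (q : ℝ × ℝ) : ℝ :=
  -((q.1 + ε) * (Real.log (q.1 + ε) - 2)) + (Real.log (q.1 + ε))⁻¹ * (-2 * q.2 ^ 2)

noncomputable def uEProfileT (q : ℝ × ℝ) : ℝ :=
  -(Real.log (q.1 + ε) - 1) + ((q.1 + ε) * Real.log (q.1 + ε) ^ 2)⁻¹ * (2 * q.2 ^ 2)

noncomputable def uEProfileY (q : ℝ × ℝ) : ℝ :=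
  (Real.log (q.1 + ε))⁻¹ * (-4 * q.2)

theorem uE_eq_liftNormSqRe : uE ε = liftNormSqRe (uEProfile ε) := by
  funext w
  simp only [uE, liftNormSqRe, uEProfile]
  congr 1
  ring

variable {ε} {q : ℝ × ℝ}

theorem hasFDerivAt_uEProfile (hs : q.1 + ε ≠ 0) (hL : Real.log (q.1 + ε) ≠ 0) :
    HasFDerivAt (uEProfile ε) (uEProfileT ε q • fst ℝ ℝ ℝ + uEProfileY ε q • snd ℝ ℝ ℝ) q := by
  have hf := ((hasDerivAt_mul_log_sub_two hs).comp_add_const q.1 ε).neg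
  have hg := (hasDerivAt_inv_log hs hL).comp_add_const q.1 ε
  have hh := (hasDerivAt_pow 2 q.2).const_mul (-2)
  refine (hasFDerivAt_add_mul_comp_fst_snd hf hg hh).congr_fderiv ?_
  simp only [uEProfileT, uEProfileY]
  congr 2 <;> ring

theorem hasFDerivAt_uEProfileT (hs : q.1 + ε ≠ 0) (hL : Real.log (q.1 + ε) ≠ 0) :
    HasFDerivAt (uEProfileT ε)
      ((-(q.1 + ε)⁻¹ - (Real.log (q.1 + ε) + 2) / ((q.1 + ε) ^ 2 * Real.log (q.1 + ε) ^ 3)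
          * (2 * q.2 ^ 2)) • fst ℝ ℝ ℝ
        + (((q.1 + ε) * Real.log (q.1 + ε) ^ 2)⁻¹ * (4 * q.2)) • snd ℝ ℝ ℝ) q := by
  have hf := (((Real.hasDerivAt_log hs).comp_add_const q.1 ε).sub_const 1).neg
  have hg := (hasDerivAt_inv_mul_log_sq hs hL).comp_add_const q.1 ε
  have hh := (hasDerivAt_pow 2 q.2).const_mul 2
  refine (hasFDerivAt_add_mul_comp_fst_snd hf hg hh).congr_fderiv ?_
  congr 2 <;> ring

theorem hasFDerivAt_uEProfileY (hs : q.1 + ε ≠ 0) (hL : Real.log (q.1 + ε) ≠ 0) :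
    HasFDerivAt (uEProfileY ε)
      ((-((q.1 + ε) * Real.log (q.1 + ε) ^ 2)⁻¹ * (-4 * q.2)) • fst ℝ ℝ ℝ
        + ((Real.log (q.1 + ε))⁻¹ * -4) • snd ℝ ℝ ℝ) q := by
  have hg := (hasDerivAt_inv_log hs hL).comp_add_const q.1 ε
  have hh := (hasDerivAt_id q.2).const_mul (-4)
  refine (hasFDerivAt_mul_comp_fst_snd hg hh).congr_fderiv ?_
  simp

end Profile

theorem det_cHess_uE (ε : ℝ) (hε : ε ∈ Set.Ioo (0 : ℝ) 1) (z : ℂ × ℂ)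
    (hz : ‖z.1‖ < 1 - ε) :
    (cHess (uE ε) z).det =
      ((1 - ε * (2 * (z.2.re) ^ 2 /
          (((‖z.1‖) ^ 2 + ε) ^ 2 * (Real.log ((‖z.1‖) ^ 2 + ε)) ^ 3)
        + 1 / (((‖z.1‖) ^ 2 + ε) * Real.log ((‖z.1‖) ^ 2 + ε))) : ℝ) : ℂ) := by
  obtain ⟨hε0, hε1⟩ := hε
  have hs : ‖z.1‖ ^ 2 + ε ∈ Set.Ioo 0 1 := by
    have := pow_lt_pow_left₀ hz (norm_nonneg z.1) two_ne_zero
    constructor <;> nlinarith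
  have hnear : ∀ᶠ q in 𝓝 (‖z.1‖ ^ 2, z.2.re), q.1 + ε ∈ Set.Ioo 0 1 :=
    (continuous_fst.add continuous_const).continuousAt.preimage_mem_nhds (isOpen_Ioo.mem_nhds hs)
  have hs0 := hs.1.ne'
  have hL := (Real.log_neg hs.1 hs.2).ne
  rw [uE_eq_liftNormSqRe, det_cHess_liftNormSqRe
    (hnear.mono fun q hq => hasFDerivAt_uEProfile hq.1.ne' (Real.log_neg hq.1 hq.2).ne)
    (hasFDerivAt_uEProfileT hs0 hL) (hasFDerivAt_uEProfileY hs0 hL)]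
  congr 1
  simp only [uEProfileT]
  field_simp
  ring
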